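/- Let R be a reflexive and transitive relation on the set T of closed terms over a signature. Then the Howe closure Ĥ of R is the least relation Q containing R that is both a congruence (∀ o ps qs, (∀ i, Q (ps i) (qs i)) → Q (node o ps) (node o qs)) and weakly transitive (Q p r ∧ R r r' → Q p r'). -/
import Mathlib


/-- Closed terms over a signature with operation symbols `O` and arities `ar`. -/
inductive Tm (O : Type*) (ar : O → ℕ) : Type _
  | node (o : O) (ts : Fin (ar o) → Tm O ar) : Tm O ar

/-- The Howe closure of a relation `R` on closed terms. -/
inductive Howe {O : Type*} {ar : O → ℕ} (R : Tm O ar → Tm O ar → Prop) :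
    Tm O ar → Tm O ar → Prop
  | base {p r : Tm O ar} : R p r → Howe R p r
  | step {o : O} {ps qs : Fin (ar o) → Tm O ar} {r : Tm O ar} :
      (∀ i, Howe R (ps i) (qs i)) → R (Tm.node o qs) r → Howe R (Tm.node o ps) r

/-- For reflexive transitive `R`, the Howe closure is the least weakly transitive
congruence containing `R`. -/
theorem howe_least_weakly_transitive_congruence {O : Type*} {ar : O → ℕ}
    (R : Tm O ar → Tm O ar → Prop) (hrefl : Reflexive R) (htrans : Transitive R) :
    (∀ p r, R p r → Howe R p r) ∧
    (∀ (o : O) (ps qs : Fin (ar o) → Tm O ar),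
      (∀ i, Howe R (ps i) (qs i)) → Howe R (Tm.node o ps) (Tm.node o qs)) ∧
    (∀ p r r', Howe R p r → R r r' → Howe R p r') ∧
    (∀ Q : Tm O ar → Tm O ar → Prop,
      (∀ p r, R p r → Q p r) →
      (∀ (o : O) (ps qs : Fin (ar o) → Tm O ar),
        (∀ i, Q (ps i) (qs i)) → Q (Tm.node o ps) (Tm.node o qs)) →
      (∀ p r r', Q p r → R r r' → Q p r') →
      ∀ p r, Howe R p r → Q p r) := by
  refine ⟨fun p r h => .base h, fun o ps qs h => .step h (hrefl _), ?_, ?_⟩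
  · intro p r r' h hr
    induction h with
    | base h => exact .base (htrans h hr)
    | step h h' => exact .step h (htrans h' hr)
  · intro Q hb hc hw p r h
    induction h with
    | base h => exact hb _ _ h
    | step h h' ih => exact hw _ _ _ (hc _ _ _ ih) h'
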